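/- Let A and B be n×n positive definite Hermitian matrices. Then trace(A⁻¹B) ≤ (trace(B⁻¹A))^{n−1} · (det B / det A). (Applied with A = g, B = g̃ this gives (n + Δφ) ≤ (n − Δ̃φ)^{n−1} e^F for solutions of the complex Monge–Ampère equation.) -/

import Mathlib

/-!
`A⁻¹ * B` is similar to the positive definite matrix `A^{-1/2} * B * A^{-1/2}`, so in terms of its
eigenvalues `λᵢ > 0` the inequality reads `∑ λᵢ ≤ (∑ λᵢ⁻¹)^(n-1) * ∏ λᵢ`. After dividing by `∏ λᵢ`
the left side is the elementary symmetric function `e_{n-1}` of the `λᵢ⁻¹`, and every monomial of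
`e_{n-1}` occurs in the expansion of `e₁^(n-1) = (∑ λᵢ⁻¹)^(n-1)`.
-/

open scoped ComplexOrder

open Finset in
theorem Finset.sum_prod_erase_le_pow_sum {ι : Type*} [DecidableEq ι] (s : Finset ι) {x : ι → ℝ}
    (hx : ∀ i ∈ s, 0 ≤ x i) :
    ∑ i ∈ s, ∏ j ∈ s.erase i, x j ≤ (∑ i ∈ s, x i) ^ (#s - 1) := by
  induction s using Finset.induction_on with
  | empty => simp
  | insert a t ha ih =>
    have hxa : 0 ≤ x a := hx a (mem_insert_self a t)
    have hxt : ∀ i ∈ t, 0 ≤ x i := fun i hi ↦ hx i (mem_insert_of_mem hi)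
    have h_split : ∑ i ∈ insert a t, ∏ j ∈ (insert a t).erase i, x j =
        ∏ j ∈ t, x j + x a * ∑ i ∈ t, ∏ j ∈ t.erase i, x j := by
      rw [sum_insert ha, erase_insert ha, mul_sum]
      refine congrArg _ (sum_congr rfl fun i hi ↦ ?_)
      rw [erase_insert_of_ne (ne_of_mem_of_not_mem hi ha).symm,
        prod_insert fun h ↦ ha (mem_of_mem_erase h)]
    rcases t.eq_empty_or_nonempty with rfl | ht
    · simp
    obtain ⟨k, hk⟩ := Nat.exists_eq_succ_of_ne_zero ht.card_pos.ne'
    set T := ∑ i ∈ t, x i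
    have hprod : ∏ j ∈ t, x j ≤ T ^ (k + 1) := by
      calc ∏ j ∈ t, x j ≤ ∏ _j ∈ t, T := prod_le_prod hxt fun i hi ↦ single_le_sum hxt hi
        _ = T ^ (k + 1) := by rw [prod_const, hk]
    have herase : ∑ i ∈ t, ∏ j ∈ t.erase i, x j ≤ T ^ k := by simpa [hk] using ih hxt
    have hT : 0 ≤ T := sum_nonneg hxt
    rw [h_split, sum_insert ha, card_insert_of_notMem ha, hk]
    calc ∏ j ∈ t, x j + x a * ∑ i ∈ t, ∏ j ∈ t.erase i, x j
        ≤ T ^ (k + 1) + x a * T ^ k := by gcongr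
      _ = (x a + T) * T ^ k := by ring
      _ ≤ (x a + T) * (x a + T) ^ k := by gcongr; linarith
      _ = (x a + T) ^ (k + 1 + 1 - 1) := by rw [Nat.add_sub_cancel, pow_succ']

theorem Finset.sum_le_sum_inv_pow_mul_prod {ι : Type*} [Fintype ι] {μ : ι → ℝ}
    (hμ : ∀ i, 0 < μ i) :
    ∑ i, μ i ≤ (∑ i, (μ i)⁻¹) ^ (Fintype.card ι - 1) * ∏ i, μ i := by
  classical
  have h_eq (i : ι) : μ i = (∏ j ∈ univ.erase i, (μ j)⁻¹) * ∏ j, μ j := by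
    rw [prod_inv_distrib, ← prod_erase_mul univ μ (mem_univ i),
      inv_mul_cancel_left₀ (prod_pos fun j _ ↦ hμ j).ne']
  calc ∑ i, μ i = (∑ i, ∏ j ∈ univ.erase i, (μ j)⁻¹) * ∏ j, μ j := by
        rw [sum_mul]; exact sum_congr rfl fun i _ ↦ h_eq i
    _ ≤ (∑ i, (μ i)⁻¹) ^ (Fintype.card ι - 1) * ∏ i, μ i := by
        gcongr
        · exact prod_nonneg fun i _ ↦ (hμ i).le
        · exact univ.sum_prod_erase_le_pow_sum fun i _ ↦ (inv_pos.mpr (hμ i)).le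

namespace Matrix

variable {𝕜 n : Type*} [RCLike 𝕜] [Fintype n] [DecidableEq n]

theorem IsHermitian.trace_cfc {A : Matrix n n 𝕜} (hA : A.IsHermitian) (f : ℝ → ℝ) :
    (cfc f A).trace = ∑ i, (f (hA.eigenvalues i) : 𝕜) := by
  rw [hA.cfc_eq, IsHermitian.cfc, Unitary.conjStarAlgAut_apply, trace_mul_cycle,
    Unitary.coe_star_mul_self, one_mul, trace_diagonal]
  rfl

theorem PosDef.trace_inv {A : Matrix n n 𝕜} (hA : A.PosDef) :
    A⁻¹.trace = ∑ i, ((hA.isHermitian.eigenvalues i)⁻¹ : 𝕜) := by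
  rw [nonsing_inv_eq_ringInverse,
    ← cfc_ringInverse_id (R := ℝ) A hA.isUnit hA.isHermitian.isSelfAdjoint,
    hA.isHermitian.trace_cfc]
  push_cast
  rfl

theorem PosDef.trace_le_trace_inv_pow_mul_det {M : Matrix n n 𝕜} (hM : M.PosDef) :
    M.trace ≤ M⁻¹.trace ^ (Fintype.card n - 1) * M.det := by
  have key := Finset.sum_le_sum_inv_pow_mul_prod hM.eigenvalues_pos
  rw [hM.isHermitian.trace_eq_sum_eigenvalues, hM.trace_inv,
    hM.isHermitian.det_eq_prod_eigenvalues]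
  exact_mod_cast key

theorem trace_le_trace_inv_pow_mul_det_of_eq_conj {X S M : Matrix n n 𝕜} (hS : IsUnit S)
    (hM : M.PosDef) (hX : X = S * M * S⁻¹) :
    X.trace ≤ X⁻¹.trace ^ (Fintype.card n - 1) * X.det := by
  have hX_inv : X⁻¹ = S * M⁻¹ * S⁻¹ := by
    rw [hX, mul_inv_rev, mul_inv_rev, nonsing_inv_nonsing_inv S ((isUnit_iff_isUnit_det S).mp hS),
      mul_assoc]
  rw [hX_inv, hX, trace_conj hS, trace_conj hS, det_conj hS]
  exact hM.trace_le_trace_inv_pow_mul_det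

open scoped MatrixOrder in
theorem PosDef.exists_inv_mul_eq_conj {A B : Matrix n n 𝕜} (hA : A.PosDef) (hB : B.PosDef) :
    ∃ S M : Matrix n n 𝕜, IsUnit S ∧ M.PosDef ∧ A⁻¹ * B = S * M * S⁻¹ := by
  set D := CFC.sqrt A⁻¹
  have hDD : D * D = A⁻¹ := CFC.sqrt_mul_sqrt_self _ hA.inv.posSemidef.nonneg
  have hD : IsUnit D := isUnit_of_mul_isUnit_left (hDD ▸ hA.inv.isUnit)
  have hD_herm : Dᴴ = D := (nonneg_iff_posSemidef.mp (CFC.sqrt_nonneg A⁻¹)).isHermitian.eq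
  refine ⟨D, Dᴴ * B * D, hD, hB.conjTranspose_mul_mul_same (mulVec_injective_iff_isUnit.mpr hD), ?_⟩
  rw [hD_herm, ← hDD, mul_assoc, mul_assoc, mul_assoc,
    mul_nonsing_inv D ((isUnit_iff_isUnit_det D).mp hD), mul_one]

end Matrix

/-- **Inequality (2.6).** Let `A` and `B` be `n×n` positive definite Hermitian matrices.
Then `trace(A⁻¹B) ≤ (trace(B⁻¹A))^{n−1} · (det B / det A)`.  (Applied with `A = g`,
`B = g̃` this gives `(n + Δφ) ≤ (n − Δ̃φ)^{n−1} e^F` for solutions of the complex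
Monge–Ampère equation.) -/
theorem trace_inv_mul_le_pow_mul_det {n : ℕ} (A B : Matrix (Fin n) (Fin n) ℂ)
    (hA : A.PosDef) (hB : B.PosDef) :
    (A⁻¹ * B).trace ≤ ((B⁻¹ * A).trace) ^ (n - 1) * (B.det / A.det) := by
  obtain ⟨S, M, hS, hM, hAB⟩ := hA.exists_inv_mul_eq_conj hB
  have key := Matrix.trace_le_trace_inv_pow_mul_det_of_eq_conj hS hM hAB
  rwa [Matrix.mul_inv_rev,
    Matrix.nonsing_inv_nonsing_inv A ((Matrix.isUnit_iff_isUnit_det A).mp hA.isUnit),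
    Matrix.det_mul, Matrix.det_nonsing_inv, Ring.inverse_eq_inv', inv_mul_eq_div,
    Fintype.card_fin] at key
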